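/- arXiv:cs/0202030 — 13 statements merged into one kernel-verified Lean document; each statement's English description precedes it below -/
import Mathlib

section
/- If A and B are disjoint events, f <_A g and f ∼_B g, then either f <_{A∪B} g, or A is negligible compared to B (in which case f ∼_{A∪B} g). -/
open Classical

theorem corollary_oldQ4 {S F : Type} [Nonempty S]
    (le : Set S → (S → F) → (S → F) → Prop)
    (hQ1 : ∀ (A : Set S) (f g h : S → F), le A f g → le A g h → le A f h)
    (hQ3 : ∀ (A B : Set S) (f g : S → F), A ∩ B = ∅ → le A f g → le B f g → le B g f → le (A ∪ B) f g)
    (hQ4 : ∀ (A B : Set S) (f g : S → F), A ∩ B = ∅ → le (A ∪ B) f g → le B f g → le B g f →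
    (le A f g ∨ ∀ h h' : S → F, le (A ∪ B) h h' ↔ le B h h'))
    (A B : Set S) (f g : S → F) (hAB : A ∩ B = ∅)
    (hA : le A f g ∧ ¬ le A g f) (hB : le B f g ∧ le B g f) :
    (le (A ∪ B) f g ∧ ¬ le (A ∪ B) g f) ∨
      ((∀ h h' : S → F, le (A ∪ B) h h' ↔ le B h h') ∧ (le (A ∪ B) f g ∧ le (A ∪ B) g f)) := by
  have hfg : le (A ∪ B) f g := hQ3 A B f g hAB hA.1 hB.1 hB.2
  by_cases hgf : le (A ∪ B) g f
  · rcases hQ4 A B g f hAB hgf hB.2 hB.1 with h | h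
    · exact absurd h hA.2
    · exact Or.inr ⟨h, hfg, hgf⟩
  · exact Or.inl ⟨hfg, hgf⟩
end

section
/- If A and B are disjoint events, f <_{A∪B} g and f ∼_B g, then f <_A g. -/
open Classical

theorem corollary_oldQ6 {S F : Type} [Nonempty S]
    (le : Set S → (S → F) → (S → F) → Prop)
    (hQ1 : ∀ (A : Set S) (f g h : S → F), le A f g → le A g h → le A f h)
    (hQ3 : ∀ (A B : Set S) (f g : S → F), A ∩ B = ∅ → le A f g → le B f g → le B g f → le (A ∪ B) f g)
    (hQ4 : ∀ (A B : Set S) (f g : S → F), A ∩ B = ∅ → le (A ∪ B) f g → le B f g → le B g f →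
    (le A f g ∨ ∀ h h' : S → F, le (A ∪ B) h h' ↔ le B h h'))
    (A B : Set S) (f g : S → F) (hAB : A ∩ B = ∅)
    (hU : le (A ∪ B) f g ∧ ¬ le (A ∪ B) g f) (hB : le B f g ∧ le B g f) :
    le A f g ∧ ¬ le A g f := by
  obtain ⟨hfg, hngf⟩ := hU
  obtain ⟨hBfg, hBgf⟩ := hB
  have h1 : le A f g := by
    rcases hQ4 A B f g hAB hfg hBfg hBgf with h | h
    · exact h
    · exact absurd ((h g f).mpr hBgf) hngf
  refine ⟨h1, fun hAgf => hngf (hQ3 A B g f hAB hAgf hBgf hBfg)⟩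
end

section
/- If A and B are disjoint events, f ≤_A g and f ≤_B g, then f ≤_{A∪B} g. -/
open Classical

theorem lemma_leqleq {S F : Type} [Nonempty S]
    (le : Set S → (S → F) → (S → F) → Prop)
    (hQ1 : ∀ (A : Set S) (f g h : S → F), le A f g → le A g h → le A f h)
    (hQ2 : ∀ (A : Set S) (f g : S → F), (∀ s ∈ A, f s = g s) → le A f g)
    (hQ3 : ∀ (A B : Set S) (f g : S → F), A ∩ B = ∅ → le A f g → le B f g → le B g f → le (A ∪ B) f g)
    (A B : Set S) (f g : S → F) (hAB : A ∩ B = ∅)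
    (hA : le A f g) (hB : le B f g) :
    le (A ∪ B) f g := by
  set h : S → F := fun s => if s ∈ A then g s else f s with hh
  have hBA : B ∩ A = ∅ := by rw [Set.inter_comm]; exact hAB
  -- on A, h = g; on B (disjoint from A), h = f
  have hAg : ∀ s ∈ A, h s = g s := fun s hs => by simp [hh, hs]
  have hBf : ∀ s ∈ B, h s = f s := fun s hs => by
    have : s ∉ A := fun hsA => by
      have : s ∈ A ∩ B := ⟨hsA, hs⟩
      rw [hAB] at this; exact this
    simp [hh, this]
  have h1 : le A f h := hQ1 A f g h hA (hQ2 A g h (fun s hs => (hAg s hs).symm))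
  have h2 : le B f h := hQ2 B f h (fun s hs => (hBf s hs).symm)
  have h3 : le B h f := hQ2 B h f hBf
  have hfh : le (A ∪ B) f h := hQ3 A B f h hAB h1 h2 h3
  have h4 : le B h g := hQ1 B h f g h3 hB
  have h5 : le A h g := hQ2 A h g hAg
  have h6 : le A g h := hQ2 A g h (fun s hs => (hAg s hs).symm)
  have hhg : le (B ∪ A) h g := hQ3 B A h g hBA h4 h5 h6
  rw [Set.union_comm] at hhg
  exact hQ1 (A ∪ B) f h g hfh hhg
end

section
/- If A and B are disjoint events, f <_A g and f <_B g, then f <_{A∪B} g. -/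
open Classical

theorem lemma_lt_lt {S F : Type} [Nonempty S]
    (le : Set S → (S → F) → (S → F) → Prop)
    (hQ1 : ∀ (A : Set S) (f g h : S → F), le A f g → le A g h → le A f h)
    (hQ2 : ∀ (A : Set S) (f g : S → F), (∀ s ∈ A, f s = g s) → le A f g)
    (hQ3 : ∀ (A B : Set S) (f g : S → F), A ∩ B = ∅ → le A f g → le B f g → le B g f → le (A ∪ B) f g)
    (hQ4 : ∀ (A B : Set S) (f g : S → F), A ∩ B = ∅ → le (A ∪ B) f g → le B f g → le B g f →
    (le A f g ∨ ∀ h h' : S → F, le (A ∪ B) h h' ↔ le B h h'))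
    (A B : Set S) (f g : S → F) (hAB : A ∩ B = ∅)
    (hA : le A f g ∧ ¬ le A g f) (hB : le B f g ∧ ¬ le B g f) :
    le (A ∪ B) f g ∧ ¬ le (A ∪ B) g f := by
  set h : S → F := fun s => if s ∈ A then g s else f s with hh
  have hBA : B ∩ A = ∅ := by rw [Set.inter_comm]; exact hAB
  have hdisjAB : ∀ s ∈ B, s ∉ A := by
    intro s hsB hsA
    have : s ∈ A ∩ B := ⟨hsA, hsB⟩
    rw [hAB] at this; exact this
  -- h = g on A, h = f on B
  have hgA : ∀ s ∈ A, h s = g s := by intro s hs; simp [hh, hs]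
  have hfB : ∀ s ∈ B, h s = f s := by intro s hs; simp [hh, hdisjAB s hs]
  have hgh_A : le A g h := hQ2 A g h (fun s hs => (hgA s hs).symm)
  have hhg_A : le A h g := hQ2 A h g hgA
  have hfh_B : le B f h := hQ2 B f h (fun s hs => (hfB s hs).symm)
  have hhf_B : le B h f := hQ2 B h f hfB
  -- f ≤_A h
  have hfh_A : le A f h := hQ1 A f g h hA.1 hgh_A
  -- f ≤_{A∪B} h
  have hfh : le (A ∪ B) f h := hQ3 A B f h hAB hfh_A hfh_B hhf_B
  -- h ≤_B g
  have hhg_B : le B h g := hQ1 B h f g hhf_B hB.1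
  -- h ≤_{B∪A} g, hence h ≤_{A∪B} g
  have hhg : le (A ∪ B) h g := by
    have := hQ3 B A h g hBA hhg_B hhg_A hgh_A
    rwa [Set.union_comm B A] at this
  have hfg : le (A ∪ B) f g := hQ1 (A ∪ B) f h g hfh hhg
  refine ⟨hfg, fun hgf => ?_⟩
  -- suppose g ≤_{A∪B} f; then h ≤_{A∪B} f
  have hhf : le (A ∪ B) h f := hQ1 (A ∪ B) h g f hhg hgf
  rcases hQ4 A B h f hAB hhf hhf_B hfh_B with hA' | hnull
  · exact hA.2 (hQ1 A g h f hgh_A hA')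
  · exact hB.2 ((hnull g f).mp hgf)
end

section
/- (Sure Thing Principle) Let A and B be disjoint events. If f =_A f', g =_A g', f =_B g and f' =_B g', then f ≤_{A∪B} g implies f' ≤_{A∪B} g'. -/
open Classical

theorem sure_thing_principle {S F : Type} [Nonempty S]
    (le : Set S → (S → F) → (S → F) → Prop)
    (hQ1 : ∀ (A : Set S) (f g h : S → F), le A f g → le A g h → le A f h)
    (hQ2 : ∀ (A : Set S) (f g : S → F), (∀ s ∈ A, f s = g s) → le A f g)
    (hQ3 : ∀ (A B : Set S) (f g : S → F), A ∩ B = ∅ → le A f g → le B f g → le B g f → le (A ∪ B) f g)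
    (hQ4 : ∀ (A B : Set S) (f g : S → F), A ∩ B = ∅ → le (A ∪ B) f g → le B f g → le B g f →
    (le A f g ∨ ∀ h h' : S → F, le (A ∪ B) h h' ↔ le B h h'))
    (A B : Set S) (f f' g g' : S → F) (hAB : A ∩ B = ∅)
    (hfA : ∀ s ∈ A, f s = f' s) (hgA : ∀ s ∈ A, g s = g' s)
    (hfB : ∀ s ∈ B, f s = g s) (hfB' : ∀ s ∈ B, f' s = g' s)
    (hfg : le (A ∪ B) f g) :
    le (A ∪ B) f' g' := by
  have hBfg : le B f g := hQ2 B f g hfB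
  have hBgf : le B g f := hQ2 B g f (fun s hs => (hfB s hs).symm)
  have hB'1 : le B f' g' := hQ2 B f' g' hfB'
  have hB'2 : le B g' f' := hQ2 B g' f' (fun s hs => (hfB' s hs).symm)
  rcases hQ4 A B f g hAB hfg hBfg hBgf with h | h
  · have h1 : le A f' f := hQ2 A f' f (fun s hs => (hfA s hs).symm)
    have h2 : le A g g' := hQ2 A g g' hgA
    exact hQ3 A B f' g' hAB (hQ1 A f' f g' h1 (hQ1 A f g g' h h2)) hB'1 hB'2
  · exact (h f' g').mpr hB'1
end

section
/- If A ≤ B (i.e., for all consequences d < c, w_A^{c,d} ≤_{A∪B} w_B^{c,d}) and c ≤ d as constants, then w_B^{c,d} ≤_{A∪B} w_A^{c,d}. -/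
open Classical

noncomputable def w {S F : Type} (A : Set S) (c d : F) : S → F :=
  fun s => if s ∈ A then c else d

/-- preference among constants (event-independent by Q5) -/
def cle {S F : Type} (le : Set S → (S → F) → (S → F) → Prop) (c d : F) : Prop :=
  le Set.univ (fun _ => c) (fun _ => d)

/-- strict preference among constants: `clt le d c` means `d < c`. -/
def clt {S F : Type} (le : Set S → (S → F) → (S → F) → Prop) (d c : F) : Prop :=
  cle le d c ∧ ¬ cle le c d

/-- plausibility relation on events: `pl le A B` means `A ≤ B`. -/
def pl {S F : Type} (le : Set S → (S → F) → (S → F) → Prop) (A B : Set S) : Prop :=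
  ∀ c d : F, clt le d c → le (A ∪ B) (w A c d) (w B c d)

/-- an event is null iff all acts are indifferent given it. -/
def isNull {S F : Type} (le : Set S → (S → F) → (S → F) → Prop) (A : Set S) : Prop :=
  ∀ h h' : S → F, le A h h'

/-- auxiliary: acts that are constant on an event compare like the constants. -/
lemma aux_const_le {S F : Type} [Nonempty S]
    (le : Set S → (S → F) → (S → F) → Prop)
    (hQ1 : ∀ (A : Set S) (f g h : S → F), le A f g → le A g h → le A f h)
    (hQ2 : ∀ (A : Set S) (f g : S → F), (∀ s ∈ A, f s = g s) → le A f g)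
    (hQ5 : ∀ (A : Set S) (c d : F), A ≠ ∅ → le A (fun _ => c) (fun _ => d) →
      ∀ B : Set S, le B (fun _ => c) (fun _ => d))
    (E : Set S) (f g : S → F) (c d : F)
    (hf : ∀ s ∈ E, f s = c) (hg : ∀ s ∈ E, g s = d) (hcd : cle le c d) :
    le E f g := by
  have h1 : le E f (fun _ => c) := hQ2 E _ _ (by intro s hs; simp [hf s hs])
  have h2 : le E (fun _ => c) (fun _ => d) :=
    hQ5 Set.univ c d Set.univ_nonempty.ne_empty hcd E
  have h3 : le E (fun _ => d) g := hQ2 E _ _ (by intro s hs; simp [hg s hs])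
  exact hQ1 E _ _ _ (hQ1 E _ _ _ h1 h2) h3

theorem lemma_defplaus {S F : Type} [Nonempty S]
    (le : Set S → (S → F) → (S → F) → Prop)
    (hQ1 : ∀ (A : Set S) (f g h : S → F), le A f g → le A g h → le A f h)
    (hQ2 : ∀ (A : Set S) (f g : S → F), (∀ s ∈ A, f s = g s) → le A f g)
    (hQ3 : ∀ (A B : Set S) (f g : S → F), A ∩ B = ∅ → le A f g → le B f g → le B g f → le (A ∪ B) f g)
    (hQ4 : ∀ (A B : Set S) (f g : S → F), A ∩ B = ∅ → le (A ∪ B) f g → le B f g → le B g f →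
    (le A f g ∨ ∀ h h' : S → F, le (A ∪ B) h h' ↔ le B h h'))
    (hQ5 : ∀ (A : Set S) (c d : F), A ≠ ∅ → le A (fun _ => c) (fun _ => d) →
    ∀ B : Set S, le B (fun _ => c) (fun _ => d))
    (hQ6 : ∃ c d : F, le Set.univ (fun _ => d) (fun _ => c) ∧ ¬ le Set.univ (fun _ => c) (fun _ => d))
    (A B : Set S) (c d : F)
    (hAB : pl le A B) (hcd : cle le c d) :
    le (A ∪ B) (w B c d) (w A c d) := by
  classical
  set f : S → F := w B c d with hf
  set g : S → F := w A c d with hg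
  by_cases hdc : cle le d c
  · -- c and d are indifferent
    -- on B, f and g are indifferent (split B into B∩A and B\A)
    have hBsplit : (B \ A) ∪ (B ∩ A) = B := by
      ext s; by_cases h : s ∈ A <;> simp [h]
    have hdisj1 : (B \ A) ∩ (B ∩ A) = ∅ := by
      ext s; simp; tauto
    have hBfg : le B f g := by
      rw [← hBsplit]
      refine hQ3 _ _ _ _ hdisj1 ?_ ?_ ?_
      · exact aux_const_le le hQ1 hQ2 hQ5 _ f g c d
          (by intro s hs; simp [hf, w, hs.1]) (by intro s hs; simp [hg, w, hs.2]) hcd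
      · exact hQ2 _ _ _ (by intro s hs; simp [hf, hg, w, hs.1, hs.2])
      · exact hQ2 _ _ _ (by intro s hs; simp [hf, hg, w, hs.1, hs.2])
    have hBgf : le B g f := by
      rw [← hBsplit]
      refine hQ3 _ _ _ _ hdisj1 ?_ ?_ ?_
      · exact aux_const_le le hQ1 hQ2 hQ5 _ g f d c
          (by intro s hs; simp [hg, w, hs.2]) (by intro s hs; simp [hf, w, hs.1]) hdc
      · exact hQ2 _ _ _ (by intro s hs; simp [hf, hg, w, hs.1, hs.2])
      · exact hQ2 _ _ _ (by intro s hs; simp [hf, hg, w, hs.1, hs.2])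
    have hsplit : (A \ B) ∪ B = A ∪ B := by
      ext s; by_cases h : s ∈ B <;> simp [h]
    have hdisj2 : (A \ B) ∩ B = ∅ := by
      ext s; simp
    rw [← hsplit]
    refine hQ3 _ _ _ _ hdisj2 ?_ hBfg hBgf
    exact aux_const_le le hQ1 hQ2 hQ5 _ f g d c
      (by intro s hs; simp [hf, w, hs.1, hs.2]) (by intro s hs; simp [hg, w, hs.1]) hdc
  · -- c strictly below d
    have hlt : clt le c d := ⟨hcd, hdc⟩
    have h1 : le (A ∪ B) (w A d c) (w B d c) := hAB d c hlt
    set C : Set S := A ∩ B with hC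
    set D : Set S := (A ∪ B) \ C with hD
    have hdisj : D ∩ C = ∅ := by
      ext s; simp [hD]
    have hunion : D ∪ C = A ∪ B := by
      ext s; simp [hD, hC]; tauto
    -- on C, w A d c and w B d c agree (both equal d)
    have hCeq : ∀ s ∈ C, w A d c s = w B d c s := by
      intro s hs; simp [w, hs.1, hs.2]
    have h4 := hQ4 D C (w A d c) (w B d c) hdisj (by rw [hunion]; exact h1)
      (hQ2 _ _ _ hCeq) (hQ2 _ _ _ (fun s hs => (hCeq s hs).symm))
    -- goal acts agree on C (both equal c)
    have hCgoal : ∀ s ∈ C, f s = g s := by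
      intro s hs; simp [hf, hg, w, hs.1, hs.2]
    rcases h4 with hDle | hiff
    · -- on D, f = w A d c and g = w B d c
      have hfeq : ∀ s ∈ D, f s = w A d c s := by
        intro s hs
        simp only [hD, hC, Set.mem_diff, Set.mem_union, Set.mem_inter_iff] at hs
        by_cases hA : s ∈ A
        · have hB : s ∉ B := fun hB => hs.2 ⟨hA, hB⟩
          simp [hf, w, hA, hB]
        · have hB : s ∈ B := hs.1.resolve_left hA
          simp [hf, w, hA, hB]
      have hgeq : ∀ s ∈ D, g s = w B d c s := by
        intro s hs
        simp only [hD, hC, Set.mem_diff, Set.mem_union, Set.mem_inter_iff] at hs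
        by_cases hA : s ∈ A
        · have hB : s ∉ B := fun hB => hs.2 ⟨hA, hB⟩
          simp [hg, w, hA, hB]
        · have hB : s ∈ B := hs.1.resolve_left hA
          simp [hg, w, hA, hB]
      have hDfg : le D f g := by
        have e1 : le D f (w A d c) := hQ2 _ _ _ hfeq
        have e2 : le D (w B d c) g := hQ2 _ _ _ (fun s hs => (hgeq s hs).symm)
        exact hQ1 D _ _ _ (hQ1 D _ _ _ e1 hDle) e2
      rw [← hunion]
      exact hQ3 _ _ _ _ hdisj hDfg (hQ2 _ _ _ hCgoal)
        (hQ2 _ _ _ (fun s hs => (hCgoal s hs).symm))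
    · rw [← hunion, hiff]
      exact hQ2 _ _ _ hCgoal
end

section
/- The relation ≤ on events defined from a preference structure satisfying (Q1)–(Q6) is reflexive and transitive. -/
open Classical

theorem lemma_preorder {S F : Type} [Nonempty S]
    (le : Set S → (S → F) → (S → F) → Prop)
    (hQ1 : ∀ (A : Set S) (f g h : S → F), le A f g → le A g h → le A f h)
    (hQ2 : ∀ (A : Set S) (f g : S → F), (∀ s ∈ A, f s = g s) → le A f g)
    (hQ3 : ∀ (A B : Set S) (f g : S → F), A ∩ B = ∅ → le A f g → le B f g → le B g f → le (A ∪ B) f g)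
    (hQ4 : ∀ (A B : Set S) (f g : S → F), A ∩ B = ∅ → le (A ∪ B) f g → le B f g → le B g f →
    (le A f g ∨ ∀ h h' : S → F, le (A ∪ B) h h' ↔ le B h h'))
    (hQ5 : ∀ (A : Set S) (c d : F), A ≠ ∅ → le A (fun _ => c) (fun _ => d) →
    ∀ B : Set S, le B (fun _ => c) (fun _ => d))
    (hQ6 : ∃ c d : F, le Set.univ (fun _ => d) (fun _ => c) ∧ ¬ le Set.univ (fun _ => c) (fun _ => d))
     :
    (∀ A : Set S, pl le A A) ∧ (∀ A B C : Set S, pl le A B → pl le B C → pl le A C) := by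
  constructor
  · intro A c d _
    exact hQ2 _ _ _ (fun s _ => rfl)
  · intro A B C hAB hBC c d hdc
    have h1 := hAB c d hdc
    have h2 := hBC c d hdc
    -- D := A ∪ B ∪ C
    have hDe1 : (A ∪ B) ∪ (C \ (A ∪ B)) = A ∪ B ∪ C := by
      ext s; simp
    have hDe2 : (B ∪ C) ∪ (A \ (B ∪ C)) = A ∪ B ∪ C := by
      ext s; simp; tauto
    have hDe3 : (A ∪ C) ∪ (B \ (A ∪ C)) = A ∪ B ∪ C := by
      ext s; simp; tauto
    -- extend h1 to D
    have hwAB : le (A ∪ B ∪ C) (w A c d) (w B c d) := by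
      rw [← hDe1]
      refine hQ3 _ _ _ _ (by ext s; simp) h1 ?_ ?_
      · refine hQ2 _ _ _ (fun s hs => ?_)
        have h := hs.2
        rw [Set.mem_union] at h; push_neg at h
        simp [w, h.1, h.2]
      · refine hQ2 _ _ _ (fun s hs => ?_)
        have h := hs.2
        rw [Set.mem_union] at h; push_neg at h
        simp [w, h.1, h.2]
    -- extend h2 to D
    have hwBC : le (A ∪ B ∪ C) (w B c d) (w C c d) := by
      rw [← hDe2]
      refine hQ3 _ _ _ _ (by ext s; simp) h2 ?_ ?_
      · refine hQ2 _ _ _ (fun s hs => ?_)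
        have h := hs.2
        rw [Set.mem_union] at h; push_neg at h
        simp [w, h.1, h.2]
      · refine hQ2 _ _ _ (fun s hs => ?_)
        have h := hs.2
        rw [Set.mem_union] at h; push_neg at h
        simp [w, h.1, h.2]
    have hwAC : le (A ∪ B ∪ C) (w A c d) (w C c d) := hQ1 _ _ _ _ hwAB hwBC
    by_cases hE : B \ (A ∪ C) = ∅
    · have hAC : A ∪ C = A ∪ B ∪ C := by rw [← hDe3, hE, Set.union_empty]
      rw [hAC]; exact hwAC
    · have hwAC' : le ((A ∪ C) ∪ (B \ (A ∪ C))) (w A c d) (w C c d) := by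
        rw [hDe3]; exact hwAC
      have hEAC : ∀ s ∈ B \ (A ∪ C), w A c d s = w C c d s := by
        intro s hs
        have h := hs.2
        rw [Set.mem_union] at h; push_neg at h
        simp [w, h.1, h.2]
      have hq := hQ4 (A ∪ C) (B \ (A ∪ C)) (w A c d) (w C c d)
        (by ext s; simp) hwAC'
        (hQ2 _ _ _ hEAC) (hQ2 _ _ _ (fun s hs => (hEAC s hs).symm))
      rcases hq with h | hnull
      · exact h
      · exfalso
        have h3 : le (B \ (A ∪ C)) (w B c d) (w C c d) := by
          refine (hnull _ _).mp ?_
          rw [hDe3]; exact hwBC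
        have hc1 : le (B \ (A ∪ C)) (fun _ => c) (w B c d) :=
          hQ2 _ _ _ (fun s hs => by simp [w, hs.1])
        have hc2 : le (B \ (A ∪ C)) (w C c d) (fun _ => d) := by
          refine hQ2 _ _ _ (fun s hs => ?_)
          have h := hs.2
          rw [Set.mem_union] at h; push_neg at h
          simp [w, h.2]
        have hcd : le (B \ (A ∪ C)) (fun _ => c) (fun _ => d) :=
          hQ1 _ _ _ _ hc1 (hQ1 _ _ _ _ h3 hc2)
        exact hdc.2 (hQ5 _ c d hE hcd Set.univ)
end

section
/- For disjoint events A and B: A 𝒩 B (A is negligible compared to B, in the sense that preferences on A∪B coincide with preferences on B) if and only if B ∪ A ≤ B in the induced plausibility relation on events. -/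
open Classical

theorem lemma_negless {S F : Type} [Nonempty S]
    (le : Set S → (S → F) → (S → F) → Prop)
    (hQ1 : ∀ (A : Set S) (f g h : S → F), le A f g → le A g h → le A f h)
    (hQ2 : ∀ (A : Set S) (f g : S → F), (∀ s ∈ A, f s = g s) → le A f g)
    (hQ3 : ∀ (A B : Set S) (f g : S → F), A ∩ B = ∅ → le A f g → le B f g → le B g f → le (A ∪ B) f g)
    (hQ4 : ∀ (A B : Set S) (f g : S → F), A ∩ B = ∅ → le (A ∪ B) f g → le B f g → le B g f →
    (le A f g ∨ ∀ h h' : S → F, le (A ∪ B) h h' ↔ le B h h'))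
    (hQ5 : ∀ (A : Set S) (c d : F), A ≠ ∅ → le A (fun _ => c) (fun _ => d) →
    ∀ B : Set S, le B (fun _ => c) (fun _ => d))
    (hQ6 : ∃ c d : F, le Set.univ (fun _ => d) (fun _ => c) ∧ ¬ le Set.univ (fun _ => c) (fun _ => d))
    (A B : Set S) (hAB : A ∩ B = ∅) :
    ((∀ h h' : S → F, le (A ∪ B) h h' ↔ le B h h') ↔ pl le (B ∪ A) B) := by
  have hU : (B ∪ A) ∪ B = A ∪ B := by ext s; simp [or_comm]; tauto
  constructor
  · intro hneg c d _
    rw [hU, hneg]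
    apply hQ2
    intro s hs
    simp [w, hs, Set.mem_union, hs]
  · intro hpl
    obtain ⟨c, d, hdc, hcd⟩ := hQ6
    have hlt : clt le d c := ⟨hdc, hcd⟩
    have h1 : le (A ∪ B) (w (B ∪ A) c d) (w B c d) := by rw [← hU]; exact hpl c d hlt
    have hBfg : le B (w (B ∪ A) c d) (w B c d) := by
      apply hQ2; intro s hs; simp [w, hs, Set.mem_union]
    have hBgf : le B (w B c d) (w (B ∪ A) c d) := by
      apply hQ2; intro s hs; simp [w, hs, Set.mem_union]
    rcases hQ4 A B _ _ hAB h1 hBfg hBgf with hAfg | hdone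
    · -- le A f g implies le A (const c) (const d), so A is empty or contradiction
      have hAc : le A (fun _ => c) (w (B ∪ A) c d) := by
        apply hQ2; intro s hs; simp [w, Set.mem_union, hs]
      have hAd : le A (w B c d) (fun _ => d) := by
        apply hQ2; intro s hs
        have hsB : s ∉ B := fun hB => by
          have : s ∈ A ∩ B := ⟨hs, hB⟩
          rw [hAB] at this; exact this
        simp [w, hsB]
      have hcd' : le A (fun _ => c) (fun _ => d) :=
        hQ1 A _ _ _ (hQ1 A _ _ _ hAc hAfg) hAd
      by_cases hAe : A = ∅
      · intro h h'
        rw [hAe, Set.empty_union]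
      · exact absurd (hQ5 A c d hAe hcd' Set.univ) hcd
    · exact hdone
end

section
/- In a generalized qualitative probability, if A ∩ D = B ∩ D = ∅ and A ∪ D < B ∪ D, then A < B. -/
open Classical

theorem gqp_lt_cancel {S : Type}
    (le : Set S → Set S → Prop)
    (hrefl : ∀ A : Set S, le A A)
    (htrans : ∀ A B C : Set S, le A B → le B C → le A C)
    (h1 : ∀ A B D : Set S, A ∩ D = ∅ → B ∩ D = ∅ → le A B → le (A ∪ D) (B ∪ D))
    (h2 : ∀ A B D : Set S, A ∩ D = ∅ → B ∩ D = ∅ → le (A ∪ D) (B ∪ D) → ¬ le (D ∪ B) D → le A B)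
    (h3 : ∀ A B : Set S, A ∩ B = ∅ → le A B → le (A ∪ B) A → le B ∅)
    (h4 : ∀ A : Set S, le (∅ : Set S) A)
    (A B D : Set S) (hAD : A ∩ D = ∅) (hBD : B ∩ D = ∅)
    (h : le (A ∪ D) (B ∪ D) ∧ ¬ le (B ∪ D) (A ∪ D)) :
    le A B ∧ ¬ le B A := by
  obtain ⟨hle, hnle⟩ := h
  have hDAD : le D (A ∪ D) := by
    have := h1 ∅ A D (by simp) hAD (h4 A)
    simpa using this
  have hnDB : ¬ le (D ∪ B) D := by
    intro hDB
    apply hnle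
    have : le (B ∪ D) D := by rwa [Set.union_comm] at hDB
    exact htrans _ _ _ this hDAD
  refine ⟨h2 A B D hAD hBD hle hnDB, ?_⟩
  intro hBA
  exact hnle (h1 B A D hBD hAD hBA)
end

section
/- In a generalized qualitative probability, if A ∩ B = ∅, A' ≤ A and B' ≤ B, then A' ∪ B' ≤ A ∪ B. -/
open Classical

theorem gqp_union_mono {S : Type}
    (le : Set S → Set S → Prop)
    (hrefl : ∀ A : Set S, le A A)
    (htrans : ∀ A B C : Set S, le A B → le B C → le A C)
    (h1 : ∀ A B D : Set S, A ∩ D = ∅ → B ∩ D = ∅ → le A B → le (A ∪ D) (B ∪ D))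
    (h2 : ∀ A B D : Set S, A ∩ D = ∅ → B ∩ D = ∅ → le (A ∪ D) (B ∪ D) → ¬ le (D ∪ B) D → le A B)
    (h3 : ∀ A B : Set S, A ∩ B = ∅ → le A B → le (A ∪ B) A → le B ∅)
    (h4 : ∀ A : Set S, le (∅ : Set S) A)
    (A B A' B' : Set S) (hAB : A ∩ B = ∅) (hA : le A' A) (hB : le B' B) :
    le (A' ∪ B') (A ∪ B) := by
  have hABdisj : ∀ x, x ∈ A → x ∈ B → False := by
    intro x hxA hxB
    have : x ∈ A ∩ B := ⟨hxA, hxB⟩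
    rw [hAB] at this; exact this
  -- monotonicity: C ⊆ D → le C D
  have mono : ∀ C D : Set S, C ⊆ D → le C D := by
    intro C D hCD
    have e1 : (∅ : Set S) ∩ C = ∅ := by simp
    have e2 : (D \ C) ∩ C = ∅ := by ext x; simp<;> tauto
    have := h1 ∅ (D \ C) C e1 e2 (h4 (D \ C))
    have eL : (∅ : Set S) ∪ C = C := by simp
    have eR : (D \ C) ∪ C = D := Set.diff_union_of_subset hCD
    rw [eL, eR] at this
    exact this
  set B'' : Set S := B' \ A' with hB''def
  have hB''B : le B'' B := htrans _ _ _ (mono B'' B' (Set.diff_subset)) hB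
  -- step 1 : A' ∪ (B'' \ A)  ≤  A ∪ (B'' \ A)
  have d1 : A' ∩ (B'' \ A) = ∅ := by ext x; simp [hB''def]<;> tauto
  have d2 : A ∩ (B'' \ A) = ∅ := by ext x; simp<;> tauto
  have step1 : le (A' ∪ (B'' \ A)) (A ∪ (B'' \ A)) := h1 _ _ _ d1 d2 hA
  -- step 2 : A ∪ (B'' \ A) = B'' ∪ (A \ B'') ≤ B ∪ (A \ B'')
  have d3 : B'' ∩ (A \ B'') = ∅ := by ext x; simp<;> tauto
  have d4 : B ∩ (A \ B'') = ∅ := by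
    ext x; simp; intro hxB hxA; exact absurd hxB (fun h => hABdisj x hxA h)
  have step2' : le (B'' ∪ (A \ B'')) (B ∪ (A \ B'')) := h1 _ _ _ d3 d4 hB''B
  have e1 : B'' ∪ (A \ B'') = A ∪ (B'' \ A) := by ext x; simp<;> tauto
  rw [e1] at step2'
  have step3 : le (A' ∪ (B'' \ A)) (B ∪ (A \ B'')) := htrans _ _ _ step1 step2'
  -- step 4 : add C₂ = A ∩ B'' to both sides
  have d5 : (A' ∪ (B'' \ A)) ∩ (A ∩ B'') = ∅ := by ext x; simp [hB''def]<;> tauto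
  have d6 : (B ∪ (A \ B'')) ∩ (A ∩ B'') = ∅ := by
    ext x; simp; rintro (hxB | ⟨hxA, hxnB⟩)
    · intro hxA; exact absurd hxB (fun h => hABdisj x hxA h)
    · intro _; exact hxnB
  have step4 : le ((A' ∪ (B'' \ A)) ∪ (A ∩ B'')) ((B ∪ (A \ B'')) ∪ (A ∩ B'')) :=
    h1 _ _ _ d5 d6 step3
  have eL : (A' ∪ (B'' \ A)) ∪ (A ∩ B'') = A' ∪ B' := by
    ext x; simp [hB''def]<;> tauto
  have eR : (B ∪ (A \ B'')) ∪ (A ∩ B'') = A ∪ B := by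
    ext x; simp<;> tauto
  rw [eL, eR] at step4
  exact step4
end

section
/- In a generalized qualitative probability, if A ∩ B = ∅ and ∅ < A ∪ B, then either A < A ∪ B or B < A ∪ B. -/
open Classical

theorem gqp_union_strict {S : Type}
    (le : Set S → Set S → Prop)
    (hrefl : ∀ A : Set S, le A A)
    (htrans : ∀ A B C : Set S, le A B → le B C → le A C)
    (h1 : ∀ A B D : Set S, A ∩ D = ∅ → B ∩ D = ∅ → le A B → le (A ∪ D) (B ∪ D))
    (h2 : ∀ A B D : Set S, A ∩ D = ∅ → B ∩ D = ∅ → le (A ∪ D) (B ∪ D) → ¬ le (D ∪ B) D → le A B)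
    (h3 : ∀ A B : Set S, A ∩ B = ∅ → le A B → le (A ∪ B) A → le B ∅)
    (h4 : ∀ A : Set S, le (∅ : Set S) A)
    (A B : Set S) (hAB : A ∩ B = ∅)
    (h : le (∅ : Set S) (A ∪ B) ∧ ¬ le (A ∪ B) (∅ : Set S)) :
    (le A (A ∪ B) ∧ ¬ le (A ∪ B) A) ∨ (le B (A ∪ B) ∧ ¬ le (A ∪ B) B) := by
  obtain ⟨h0, hne⟩ := h
  have hBA : B ∩ A = ∅ := by rw [Set.inter_comm]; exact hAB
  have hA : le A (A ∪ B) := by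
    have := h1 ∅ B A (by simp) hBA (h4 B)
    simpa [Set.union_comm] using this
  have hB : le B (A ∪ B) := by
    have := h1 ∅ A B (by simp) hAB (h4 A)
    simpa [Set.union_comm] using this
  by_cases hc : le (A ∪ B) A
  · by_cases hd : le (A ∪ B) B
    · exfalso
      have hABle : le A B := htrans _ _ _ hA hd
      have hBAle : le B A := htrans _ _ _ hB hc
      have hA0 : le A ∅ := h3 B A hBA hBAle (by simpa [Set.union_comm] using hd)
      exact hne (htrans _ _ _ hc hA0)
    · right; exact ⟨hB, hd⟩
  · left; exact ⟨hA, hc⟩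
end

section
/- The negligibility relation ≪ of a generalized qualitative probability is modular: if A ≪ C then, for every event B, either A ≪ B or B ≪ C. -/
open Classical

theorem gqp_negligible_modular {S : Type}
    (le : Set S → Set S → Prop)
    (hrefl : ∀ A : Set S, le A A)
    (htrans : ∀ A B C : Set S, le A B → le B C → le A C)
    (h1 : ∀ A B D : Set S, A ∩ D = ∅ → B ∩ D = ∅ → le A B → le (A ∪ D) (B ∪ D))
    (h2 : ∀ A B D : Set S, A ∩ D = ∅ → B ∩ D = ∅ → le (A ∪ D) (B ∪ D) → ¬ le (D ∪ B) D → le A B)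
    (h3 : ∀ A B : Set S, A ∩ B = ∅ → le A B → le (A ∪ B) A → le B ∅)
    (h4 : ∀ A : Set S, le (∅ : Set S) A)
    (A B C : Set S)
    (hAC : ¬ le C ∅ ∧ le (A ∪ C) (C \ A)) :
    (¬ le B ∅ ∧ le (A ∪ B) (B \ A)) ∨ (¬ le C ∅ ∧ le (B ∪ C) (C \ B)) := by
  obtain ⟨hC0, hAC⟩ := hAC
  -- monotonicity with respect to inclusion
  have mono : ∀ X Y : Set S, X ⊆ Y → le X Y := by
    intro X Y hXY
    have h := h1 ∅ (Y \ X) X (by simp) (by ext x; simp) (h4 _)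
    rwa [Set.empty_union, Set.diff_union_of_subset hXY] at h
  -- union of two negligible sets is negligible
  have lemU : ∀ X Y : Set S, X ∩ Y = ∅ → le (X ∪ C) (C \ X) → le (Y ∪ C) (C \ Y) →
      le (X ∪ Y ∪ C) (C \ (X ∪ Y)) := by
    intro X Y hXY hX hY
    have hXY' : ∀ x, x ∈ X → x ∈ Y → False := fun x hx hy =>
      Set.eq_empty_iff_forall_notMem.mp hXY x ⟨hx, hy⟩
    by_cases hne : le ((C ∩ Y) ∪ (C \ (X ∪ Y))) (C ∩ Y)
    · exfalso
      have e1 : C \ X = (C ∩ Y) ∪ (C \ (X ∪ Y)) := by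
        ext x; have := hXY' x
        simp only [Set.mem_union, Set.mem_inter_iff, Set.mem_diff]; tauto
      have c0 : le C (C \ X) := htrans _ _ _ (mono C (X ∪ C) Set.subset_union_right) hX
      have c1 : le C (C ∩ Y) := htrans _ _ _ c0 (by rw [e1]; exact hne)
      have c2 : le (C \ Y) Y :=
        htrans _ _ _ (mono (C \ Y) C Set.diff_subset)
          (htrans _ _ _ c1 (mono _ Y Set.inter_subset_right))
      have e2 : (C \ Y) ∪ Y = Y ∪ C := by
        ext x; simp only [Set.mem_union, Set.mem_diff]; tauto
      have c3 : le ((C \ Y) ∪ Y) (C \ Y) := by rw [e2]; exact hY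
      have c4 : le Y ∅ := h3 (C \ Y) Y (by ext x; simp only [Set.mem_inter_iff,
        Set.mem_diff, Set.mem_empty_iff_false]; tauto) c2 c3
      exact hC0 (htrans _ _ _ c1 (htrans _ _ _ (mono (C ∩ Y) Y Set.inter_subset_right) c4))
    · have s1 := h1 (Y ∪ C) (C \ Y) (X \ C)
        (by ext x; have := hXY' x; simp only [Set.mem_inter_iff, Set.mem_union,
          Set.mem_diff, Set.mem_empty_iff_false]; tauto)
        (by ext x; simp only [Set.mem_inter_iff, Set.mem_diff,
          Set.mem_empty_iff_false]; tauto) hY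
      have e3 : (Y ∪ C) ∪ (X \ C) = X ∪ Y ∪ C := by
        ext x; simp only [Set.mem_union, Set.mem_diff]; tauto
      have e4 : (C \ Y) ∪ (X \ C) = (X ∪ C) \ Y := by
        ext x; have := hXY' x
        simp only [Set.mem_union, Set.mem_diff]; tauto
      rw [e3, e4] at s1
      have e5 : X ∪ C = ((X ∪ C) \ Y) ∪ (C ∩ Y) := by
        ext x; have := hXY' x
        simp only [Set.mem_union, Set.mem_diff, Set.mem_inter_iff]; tauto
      have e6 : C \ X = (C \ (X ∪ Y)) ∪ (C ∩ Y) := by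
        ext x; have := hXY' x
        simp only [Set.mem_union, Set.mem_diff, Set.mem_inter_iff]; tauto
      have hX' : le (((X ∪ C) \ Y) ∪ (C ∩ Y)) ((C \ (X ∪ Y)) ∪ (C ∩ Y)) := by
        rw [← e5, ← e6]; exact hX
      have s2 := h2 ((X ∪ C) \ Y) (C \ (X ∪ Y)) (C ∩ Y)
        (by ext x; simp only [Set.mem_inter_iff, Set.mem_union, Set.mem_diff,
          Set.mem_empty_iff_false]; tauto)
        (by ext x; simp only [Set.mem_inter_iff, Set.mem_union, Set.mem_diff,
          Set.mem_empty_iff_false]; tauto) hX' hne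
      exact htrans _ _ _ s1 s2
  by_cases hB0 : le B ∅
  · right
    refine ⟨hC0, ?_⟩
    have h := h1 B ∅ (C \ B)
      (by ext x; simp only [Set.mem_inter_iff, Set.mem_diff,
        Set.mem_empty_iff_false]; tauto) (by simp) hB0
    have e : B ∪ (C \ B) = B ∪ C := by
      ext x; simp only [Set.mem_union, Set.mem_diff]; tauto
    rwa [e, Set.empty_union] at h
  · by_cases hnd : le ((C \ (A ∪ B)) ∪ (B \ A)) (C \ (A ∪ B))
    · right
      refine ⟨hC0, ?_⟩
      have s := h1 ((C \ (A ∪ B)) ∪ (B \ A)) (C \ (A ∪ B)) (C ∩ A)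
        (by ext x; simp only [Set.mem_inter_iff, Set.mem_union, Set.mem_diff,
          Set.mem_empty_iff_false]; tauto)
        (by ext x; simp only [Set.mem_inter_iff, Set.mem_union, Set.mem_diff,
          Set.mem_empty_iff_false]; tauto) hnd
      have e1 : ((C \ (A ∪ B)) ∪ (B \ A)) ∪ (C ∩ A) = (B \ A) ∪ C := by
        ext x; simp only [Set.mem_union, Set.mem_diff, Set.mem_inter_iff]; tauto
      have e2 : (C \ (A ∪ B)) ∪ (C ∩ A) = C \ (B \ A) := by
        ext x; simp only [Set.mem_union, Set.mem_diff, Set.mem_inter_iff, not_and, not_not]; tauto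
      rw [e1, e2] at s
      have hU := lemU A (B \ A)
        (by ext x; simp only [Set.mem_inter_iff, Set.mem_diff,
          Set.mem_empty_iff_false]; tauto) hAC s
      have e3 : A ∪ (B \ A) ∪ C = A ∪ B ∪ C := by
        ext x; simp only [Set.mem_union, Set.mem_diff]; tauto
      have e4 : C \ (A ∪ (B \ A)) = C \ (A ∪ B) := by
        ext x; simp only [Set.mem_union, Set.mem_diff, not_or, not_and, not_not]; tauto
      rw [e3, e4] at hU
      refine htrans _ _ _ (mono (B ∪ C) (A ∪ B ∪ C) ?_)
        (htrans _ _ _ hU (mono _ (C \ B) ?_))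
      · intro x hx; simp only [Set.mem_union] at *; tauto
      · intro x hx; simp only [Set.mem_union, Set.mem_diff, not_or] at *; tauto
    · left
      refine ⟨hB0, ?_⟩
      have s := h1 (A ∪ C) (C \ A) (B \ (A ∪ C))
        (by ext x; simp only [Set.mem_inter_iff, Set.mem_union, Set.mem_diff,
          Set.mem_empty_iff_false, not_or]; tauto)
        (by ext x; simp only [Set.mem_inter_iff, Set.mem_union, Set.mem_diff,
          Set.mem_empty_iff_false, not_or]; tauto) hAC
      have e1 : (A ∪ C) ∪ (B \ (A ∪ C)) = (A ∪ B) ∪ (C \ (A ∪ B)) := by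
        ext x; simp only [Set.mem_union, Set.mem_diff, not_or]; tauto
      have e2 : (C \ A) ∪ (B \ (A ∪ C)) = (B \ A) ∪ (C \ (A ∪ B)) := by
        ext x; simp only [Set.mem_union, Set.mem_diff, not_or]; tauto
      rw [e1, e2] at s
      exact h2 (A ∪ B) (B \ A) (C \ (A ∪ B))
        (by ext x; simp only [Set.mem_inter_iff, Set.mem_union, Set.mem_diff,
          Set.mem_empty_iff_false, not_or]; tauto)
        (by ext x; simp only [Set.mem_inter_iff, Set.mem_union, Set.mem_diff,
          Set.mem_empty_iff_false, not_or]; tauto) s hnd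
end

section
/- For the negligibility relation ≪ of a generalized qualitative probability: if A ≪ B and A' ≪ B, then A ∪ A' ≪ B; and if A ≪ B ∪ B', then A ≪ B or A ≪ B'. -/
open Classical

theorem gqp_negligible_union {S : Type}
    (le : Set S → Set S → Prop)
    (hrefl : ∀ A : Set S, le A A)
    (htrans : ∀ A B C : Set S, le A B → le B C → le A C)
    (h1 : ∀ A B D : Set S, A ∩ D = ∅ → B ∩ D = ∅ → le A B → le (A ∪ D) (B ∪ D))
    (h2 : ∀ A B D : Set S, A ∩ D = ∅ → B ∩ D = ∅ → le (A ∪ D) (B ∪ D) → ¬ le (D ∪ B) D → le A B)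
    (h3 : ∀ A B : Set S, A ∩ B = ∅ → le A B → le (A ∪ B) A → le B ∅)
    (h4 : ∀ A : Set S, le (∅ : Set S) A)
    (A A' B B' : Set S) :
    ((¬ le B ∅ ∧ le (A ∪ B) (B \ A)) → (¬ le B ∅ ∧ le (A' ∪ B) (B \ A')) →
      (¬ le B ∅ ∧ le ((A ∪ A') ∪ B) (B \ (A ∪ A')))) ∧
    ((¬ le (B ∪ B') ∅ ∧ le (A ∪ (B ∪ B')) ((B ∪ B') \ A)) →
      ((¬ le B ∅ ∧ le (A ∪ B) (B \ A)) ∨ (¬ le B' ∅ ∧ le (A ∪ B') (B' \ A)))) := by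
  -- monotonicity: X ⊆ Y → le X Y
  have mono : ∀ X Y : Set S, X ⊆ Y → le X Y := by
    intro X Y hXY
    have h := h1 ∅ (Y \ X) X (Set.empty_inter X)
      (by ext x; simp only [Set.mem_inter_iff, Set.mem_diff, Set.mem_empty_iff_false]; tauto)
      (h4 (Y \ X))
    have e1 : (∅ : Set S) ∪ X = X := Set.empty_union X
    have e2 : (Y \ X) ∪ X = Y := by
      ext x; simp only [Set.mem_union, Set.mem_diff]
      constructor
      · rintro (⟨h, _⟩ | h); exact h; exact hXY h
      · intro h; by_cases hx : x ∈ X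
        · exact Or.inr hx
        · exact Or.inl ⟨h, hx⟩
    rw [e1, e2] at h
    exact h
  -- adding a null set: le Z ∅ → Z ∩ W = ∅ → le (Z ∪ W) W
  have nullAdd : ∀ Z W : Set S, le Z ∅ → Z ∩ W = ∅ → le (Z ∪ W) W := by
    intro Z W hZ hZW
    have h := h1 Z ∅ W hZW (Set.empty_inter W) hZ
    rwa [Set.empty_union] at h
  -- union of null sets is null
  have nullUnion : ∀ X Y : Set S, le X ∅ → le Y ∅ → le (X ∪ Y) ∅ := by
    intro X Y hX hY
    have hYX : le (Y \ X) ∅ := htrans _ _ _ (mono _ _ Set.diff_subset) hY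
    have h := nullAdd (Y \ X) X hYX
      (by ext x; simp only [Set.mem_inter_iff, Set.mem_diff, Set.mem_empty_iff_false]; tauto)
    have e : (Y \ X) ∪ X = X ∪ Y := by
      ext x; simp only [Set.mem_union, Set.mem_diff]; tauto
    rw [e] at h
    exact htrans _ _ _ h hX
  constructor
  · -- Part 1
    rintro ⟨hB, H1⟩ ⟨-, H2⟩
    refine ⟨hB, ?_⟩
    set G : Set S := B \ (A ∪ A') with hG
    set N : Set S := A' \ A with hN
    set M : Set S := A \ A' with hM
    set T : Set S := (A ∪ A') ∪ B with hT
    -- Q1 : le T (G ∪ N)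
    have Q1 : le T (G ∪ N) := by
      have d1 : (A ∪ B) ∩ (A' \ (A ∪ B)) = ∅ := by
        ext x; simp only [Set.mem_inter_iff, Set.mem_union, Set.mem_diff, Set.mem_empty_iff_false]; tauto
      have d2 : (B \ A) ∩ (A' \ (A ∪ B)) = ∅ := by
        ext x; simp only [Set.mem_inter_iff, Set.mem_union, Set.mem_diff, Set.mem_empty_iff_false]; tauto
      have h := h1 (A ∪ B) (B \ A) (A' \ (A ∪ B)) d1 d2 H1
      have e1 : (A ∪ B) ∪ (A' \ (A ∪ B)) = T := by
        rw [hT]; ext x; simp only [Set.mem_union, Set.mem_diff]; tauto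
      have e2 : (B \ A) ∪ (A' \ (A ∪ B)) = G ∪ N := by
        rw [hG, hN]; ext x; simp only [Set.mem_union, Set.mem_diff]; tauto
      rw [e1, e2] at h; exact h
    -- Q2 : le T (G ∪ M)
    have Q2 : le T (G ∪ M) := by
      have d1 : (A' ∪ B) ∩ (A \ (A' ∪ B)) = ∅ := by
        ext x; simp only [Set.mem_inter_iff, Set.mem_union, Set.mem_diff, Set.mem_empty_iff_false]; tauto
      have d2 : (B \ A') ∩ (A \ (A' ∪ B)) = ∅ := by
        ext x; simp only [Set.mem_inter_iff, Set.mem_union, Set.mem_diff, Set.mem_empty_iff_false]; tauto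
      have h := h1 (A' ∪ B) (B \ A') (A \ (A' ∪ B)) d1 d2 H2
      have e1 : (A' ∪ B) ∪ (A \ (A' ∪ B)) = T := by
        rw [hT]; ext x; simp only [Set.mem_union, Set.mem_diff]; tauto
      have e2 : (B \ A') ∪ (A \ (A' ∪ B)) = G ∪ M := by
        rw [hG, hM]; ext x; simp only [Set.mem_union, Set.mem_diff]; tauto
      rw [e1, e2] at h; exact h
    -- side condition 1 : ¬ le (N ∪ G) N
    have hs1 : ¬ le (N ∪ G) N := by
      intro hc
      have hTN : le T N := htrans _ _ _ Q1 (by rwa [Set.union_comm N G] at hc)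
      have hNsub : N ⊆ A' ∪ B := fun x hx => Or.inl hx.1
      have hNle : le N (B \ A') := htrans _ _ _ (mono _ _ hNsub) H2
      have hsub2 : N ∪ (B \ A') ⊆ T := by
        rw [hT, hN]; intro x hx
        rcases hx with hx | hx
        · exact Or.inl (Or.inr hx.1)
        · exact Or.inr hx.1
      have hUnion : le (N ∪ (B \ A')) N := htrans _ _ _ (mono _ _ hsub2) hTN
      have hdisj : N ∩ (B \ A') = ∅ := by
        rw [hN]; ext x; simp only [Set.mem_inter_iff, Set.mem_diff, Set.mem_empty_iff_false]; tauto
      have hnull : le (B \ A') ∅ := h3 N (B \ A') hdisj hNle hUnion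
      have : le B ∅ :=
        htrans _ _ _ (mono _ _ Set.subset_union_right) (htrans _ _ _ H2 hnull)
      exact hB this
    -- side condition 2 : ¬ le (M ∪ G) M
    have hs2 : ¬ le (M ∪ G) M := by
      intro hc
      have hTM : le T M := htrans _ _ _ Q2 (by rwa [Set.union_comm M G] at hc)
      have hMsub : M ⊆ A ∪ B := fun x hx => Or.inl hx.1
      have hMle : le M (B \ A) := htrans _ _ _ (mono _ _ hMsub) H1
      have hsub2 : M ∪ (B \ A) ⊆ T := by
        rw [hT, hM]; intro x hx
        rcases hx with hx | hx
        · exact Or.inl (Or.inl hx.1)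
        · exact Or.inr hx.1
      have hUnion : le (M ∪ (B \ A)) M := htrans _ _ _ (mono _ _ hsub2) hTM
      have hdisj : M ∩ (B \ A) = ∅ := by
        rw [hM]; ext x; simp only [Set.mem_inter_iff, Set.mem_diff, Set.mem_empty_iff_false]; tauto
      have hnull : le (B \ A) ∅ := h3 M (B \ A) hdisj hMle hUnion
      have : le B ∅ :=
        htrans _ _ _ (mono _ _ Set.subset_union_right) (htrans _ _ _ H1 hnull)
      exact hB this
    -- cancel N : le (A ∪ G) G
    have hAG : le (A ∪ G) G := by
      have d1 : (A ∪ G) ∩ N = ∅ := by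
        rw [hG, hN]; ext x
        simp only [Set.mem_inter_iff, Set.mem_union, Set.mem_diff, Set.mem_empty_iff_false]; tauto
      have d2 : G ∩ N = ∅ := by
        rw [hG, hN]; ext x
        simp only [Set.mem_inter_iff, Set.mem_union, Set.mem_diff, Set.mem_empty_iff_false]; tauto
      have e : (A ∪ G) ∪ N = T := by
        rw [hG, hN, hT]; ext x; simp only [Set.mem_union, Set.mem_diff]; tauto
      exact h2 (A ∪ G) G N d1 d2 (by rw [e]; exact Q1) hs1
    -- cancel M : le (A' ∪ G) G
    have hA'G : le (A' ∪ G) G := by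
      have d1 : (A' ∪ G) ∩ M = ∅ := by
        rw [hG, hM]; ext x
        simp only [Set.mem_inter_iff, Set.mem_union, Set.mem_diff, Set.mem_empty_iff_false]; tauto
      have d2 : G ∩ M = ∅ := by
        rw [hG, hM]; ext x
        simp only [Set.mem_inter_iff, Set.mem_union, Set.mem_diff, Set.mem_empty_iff_false]; tauto
      have e : (A' ∪ G) ∪ M = T := by
        rw [hG, hM, hT]; ext x; simp only [Set.mem_union, Set.mem_diff]; tauto
      exact h2 (A' ∪ G) G M d1 d2 (by rw [e]; exact Q2) hs2
    -- combine
    have d1 : (A ∪ G) ∩ (A' \ (A ∪ G)) = ∅ := by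
      ext x; simp only [Set.mem_inter_iff, Set.mem_union, Set.mem_diff, Set.mem_empty_iff_false]; tauto
    have d2 : G ∩ (A' \ (A ∪ G)) = ∅ := by
      ext x; simp only [Set.mem_inter_iff, Set.mem_union, Set.mem_diff, Set.mem_empty_iff_false]; tauto
    have step := h1 (A ∪ G) G (A' \ (A ∪ G)) d1 d2 hAG
    have e1 : (A ∪ G) ∪ (A' \ (A ∪ G)) = T := by
      rw [hG, hT]; ext x; simp only [Set.mem_union, Set.mem_diff]; tauto
    rw [e1] at step
    have hsub : G ∪ (A' \ (A ∪ G)) ⊆ A' ∪ G := by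
      intro x hx; rcases hx with hx | hx
      · exact Or.inr hx
      · exact Or.inl hx.1
    exact htrans _ _ _ step (htrans _ _ _ (mono _ _ hsub) hA'G)
  · -- Part 2
    rintro ⟨hBB', H⟩
    set D : Set S := B' \ (A ∪ B) with hD
    have e1 : A ∪ (B ∪ B') = (A ∪ B) ∪ D := by
      rw [hD]; ext x; simp only [Set.mem_union, Set.mem_diff]; tauto
    have e2 : (B ∪ B') \ A = (B \ A) ∪ D := by
      rw [hD]; ext x; simp only [Set.mem_union, Set.mem_diff]; tauto
    have H' : le ((A ∪ B) ∪ D) ((B \ A) ∪ D) := by rw [← e1, ← e2]; exact H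
    by_cases hc : le (D ∪ (B \ A)) D
    · -- A ≪ B'
      right
      have hAll : le (A ∪ (B ∪ B')) D := by
        rw [e1]
        exact htrans _ _ _ H' (by rwa [Set.union_comm D (B \ A)] at hc)
      have hDsub : D ⊆ B' \ A := by
        rw [hD]; intro x hx; exact ⟨hx.1, fun h => hx.2 (Or.inl h)⟩
      constructor
      · intro hB'
        have hDnull : le D ∅ := htrans _ _ _ (mono _ _ (hD ▸ Set.diff_subset)) hB'
        exact hBB' (htrans _ _ _ (mono _ _ Set.subset_union_right)
          (htrans _ _ _ hAll hDnull))
      · have hsub : A ∪ B' ⊆ A ∪ (B ∪ B') := by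
          intro x hx; rcases hx with hx | hx
          · exact Or.inl hx
          · exact Or.inr (Or.inr hx)
        exact htrans _ _ _ (mono _ _ hsub) (htrans _ _ _ hAll (mono _ _ hDsub))
    · -- cancel D
      have d1 : (A ∪ B) ∩ D = ∅ := by
        rw [hD]; ext x
        simp only [Set.mem_inter_iff, Set.mem_union, Set.mem_diff, Set.mem_empty_iff_false]; tauto
      have d2 : (B \ A) ∩ D = ∅ := by
        rw [hD]; ext x
        simp only [Set.mem_inter_iff, Set.mem_union, Set.mem_diff, Set.mem_empty_iff_false]; tauto
      have P : le (A ∪ B) (B \ A) := h2 (A ∪ B) (B \ A) D d1 d2 H' hc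
      by_cases hB : le B ∅
      · right
        have hABnull : le (A ∪ B) ∅ :=
          htrans _ _ _ P (htrans _ _ _ (mono _ _ Set.diff_subset) hB)
        have hAnull : le A ∅ := htrans _ _ _ (mono _ _ Set.subset_union_left) hABnull
        constructor
        · intro hB'; exact hBB' (nullUnion B B' hB hB')
        · have hdisj : A ∩ (B' \ A) = ∅ := by
            ext x; simp only [Set.mem_inter_iff, Set.mem_diff, Set.mem_empty_iff_false]; tauto
          have h := nullAdd A (B' \ A) hAnull hdisj
          have e : A ∪ (B' \ A) = A ∪ B' := by
            ext x; simp only [Set.mem_union, Set.mem_diff]; tauto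
          rwa [e] at h
      · exact Or.inl ⟨hB, P⟩
end
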